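/- arXiv:1907.09834 — 2 statements merged into one kernel-verified Lean document; each statement's English description precedes it below -/
import Mathlib

section
/- Let δ ∈ (0,1) and let a, a', s', r' be points in Euclidean space such that a' lies on the segment from a to r' (with d(a,a') ≤ d(a,r')) and d(s',r') ≤ (√δ/2)·d(a',r'). Then d(a,s') - d(a',s') ≥ ((1+δ/4)/(1+δ/2))·d(a,a'). -/
/-!
Put `u = a' - a`, `w = r' - a'`, `v = s' - a'`. Since `s'` is close to `r'` relative to `‖w‖`,
the angle between `v` and `w` is small: `⟪w, v⟫ ≥ √(1 - δ/4) ‖w‖ ‖v‖`. As `a'` lies between `a`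
and `r'`, `u` points along `w`, so the same cosine bound holds for `u` and `v`. Expanding
`‖u + v‖²` then gives `‖u + v‖ ≥ ‖v‖ + c ‖u‖` for every `c ≤ √(1 - δ/4)`, and
`(1 + δ/4)/(1 + δ/2)` is such a `c`.
-/

open RealInnerProductSpace

section InnerProductSpace

variable {E : Type*} [NormedAddCommGroup E] [InnerProductSpace ℝ E]

theorem sqrt_one_sub_sq_mul_le_inner {v w : E} {ε : ℝ} (hε : ε ^ 2 ≤ 1)
    (h : ‖v - w‖ ≤ ε * ‖w‖) : √(1 - ε ^ 2) * (‖w‖ * ‖v‖) ≤ ⟪w, v⟫ := by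
  have hsq : ‖v - w‖ ^ 2 ≤ (ε * ‖w‖) ^ 2 := pow_le_pow_left₀ (norm_nonneg _) h 2
  rw [norm_sub_sq_real, real_inner_comm] at hsq
  have hs : √(1 - ε ^ 2) ^ 2 = 1 - ε ^ 2 := Real.sq_sqrt (by linarith)
  -- AM-GM: `2 √(1 - ε²) ‖w‖ ‖v‖ ≤ ‖v‖² + (1 - ε²) ‖w‖² ≤ 2 ⟪w, v⟫`
  nlinarith [sq_nonneg (‖v‖ - √(1 - ε ^ 2) * ‖w‖)]

theorem SameRay.sqrt_one_sub_sq_mul_le_inner {u v w : E} {ε : ℝ} (hray : SameRay ℝ u w)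
    (hε : ε ^ 2 ≤ 1) (h : ‖v - w‖ ≤ ε * ‖w‖) : √(1 - ε ^ 2) * (‖u‖ * ‖v‖) ≤ ⟪u, v⟫ := by
  rcases eq_or_ne w 0 with rfl | hw
  · obtain rfl : v = 0 := by simpa using h
    simp
  obtain ⟨t, ht, rfl⟩ := hray.exists_nonneg_right hw
  rw [real_inner_smul_left, norm_smul, Real.norm_of_nonneg ht]
  calc √(1 - ε ^ 2) * (t * ‖w‖ * ‖v‖) = t * (√(1 - ε ^ 2) * (‖w‖ * ‖v‖)) := by ring
    _ ≤ t * ⟪w, v⟫ := by gcongr; exact _root_.sqrt_one_sub_sq_mul_le_inner hε h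

theorem add_mul_norm_le_norm_add {u v : E} {c : ℝ} (hc₀ : 0 ≤ c) (hc₁ : c ≤ 1)
    (h : c * (‖u‖ * ‖v‖) ≤ ⟪u, v⟫) : ‖v‖ + c * ‖u‖ ≤ ‖u + v‖ := by
  rw [← pow_le_pow_iff_left₀ (by positivity) (norm_nonneg _) two_ne_zero, norm_add_sq_real]
  nlinarith [mul_le_mul_of_nonneg_right (mul_le_one₀ hc₁ hc₀ hc₁) (sq_nonneg ‖u‖)]

end InnerProductSpace

theorem div_le_sqrt_one_sub {δ : ℝ} (hδ₀ : 0 ≤ δ) (hδ₁ : δ ≤ 1) :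
    (1 + δ / 4) / (1 + δ / 2) ≤ √(1 - δ / 4) := by
  apply Real.le_sqrt_of_sq_le
  rw [div_pow, div_le_iff₀ (by positivity)]
  nlinarith [mul_nonneg hδ₀ hδ₀, mul_nonneg (mul_nonneg hδ₀ hδ₀) hδ₀]

theorem stmt2_general {n : ℕ} (δ : ℝ) (hδ : δ ∈ Set.Ioo (0:ℝ) 1)
    (a a' s' r' : EuclideanSpace ℝ (Fin n))
    (hseg : dist a a' + dist a' r' = dist a r')
    (hs : dist s' r' ≤ (Real.sqrt δ / 2) * dist a' r') :
    dist a s' - dist a' s' ≥ ((1 + δ/4)/(1 + δ/2)) * dist a a' := by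
  obtain ⟨hδ₀, hδ₁⟩ := hδ
  have hray : SameRay ℝ (a' - a) (r' - a') := (dist_add_dist_eq_iff.mp hseg).sameRay_vsub
  have hnear : ‖(s' - a') - (r' - a')‖ ≤ √δ / 2 * ‖r' - a'‖ := by
    rwa [sub_sub_sub_cancel_right, ← dist_eq_norm, ← dist_eq_norm, dist_comm r']
  have hε : (√δ / 2) ^ 2 = δ / 4 := by rw [div_pow, Real.sq_sqrt hδ₀.le]; norm_num
  have hcos := hray.sqrt_one_sub_sq_mul_le_inner (by linarith) hnear
  rw [hε] at hcos
  have hc : (1 + δ / 4) / (1 + δ / 2) * (‖a' - a‖ * ‖s' - a'‖) ≤ ⟪a' - a, s' - a'⟫ :=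
    (mul_le_mul_of_nonneg_right (div_le_sqrt_one_sub hδ₀.le hδ₁.le) (by positivity)).trans hcos
  have key := add_mul_norm_le_norm_add (by positivity)
    ((div_le_one (by positivity)).mpr (by linarith)) hc
  rw [sub_add_sub_cancel', ← dist_eq_norm, ← dist_eq_norm, ← dist_eq_norm] at key
  rw [dist_comm a, dist_comm a', dist_comm a]
  linarith

theorem stmt2 {n : ℕ} (δ : ℝ) (hδ : δ ∈ Set.Ioo (0:ℝ) 1)
    (a a' s' r' : EuclideanSpace ℝ (Fin n))
    (hseg : dist a a' + dist a' r' = dist a r')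
    (hle : dist a a' ≤ dist a r')
    (hs : dist s' r' ≤ (Real.sqrt δ / 2) * dist a' r') :
    dist a s' - dist a' s' ≥ ((1 + δ/4)/(1 + δ/2)) * dist a a' :=
  stmt2_general δ hδ a a' s' r' hseg hs
end

section
/- Let k ≥ 1, α ≥ 0, β ≥ 0, T_0 ≥ 0 with k·α < 1. Define recursively A_i = α·T_{i-1} + β and T_i = T_{i-1} + A_i for 1 ≤ i ≤ k. Then ∑_{i=1}^{k} A_i ≤ (k·α·T_0 + k·β)/(1 - k·α). -/
/-!
Summing the recursion telescopes: `∑ A i = T k - T₀`. All quantities are nonnegative, so `T` is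
nondecreasing and every increment `α T (i-1) + β` is at most `α T k + β`. Hence
`T k - T₀ ≤ k (α T k + β)`, and solving this for `T k - T₀` (possible as `k α < 1`) gives the bound.
-/

open Finset

section GrowthRecursion

variable {α β : ℝ} {k : ℕ} {T : ℕ → ℝ}

lemma nonneg_of_add_mul_add (hα : 0 ≤ α) (hβ : 0 ≤ β) (h₀ : 0 ≤ T 0)
    (hstep : ∀ i < k, T (i + 1) = T i + (α * T i + β)) : ∀ i ≤ k, 0 ≤ T i := by
  intro i hi
  induction i with
  | zero => exact h₀
  | succ i ih =>
    have hTi := ih (by omega)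
    rw [hstep i (by omega)]
    linarith [mul_nonneg hα hTi]

lemma monotoneOn_of_add_mul_add (hα : 0 ≤ α) (hβ : 0 ≤ β) (h₀ : 0 ≤ T 0)
    (hstep : ∀ i < k, T (i + 1) = T i + (α * T i + β)) : MonotoneOn T (Set.Iic k) :=
  monotoneOn_of_le_succ Set.ordConnected_Iic fun i _ _ hsucc => by
    simp only [Order.succ_eq_add_one, Set.mem_Iic] at hsucc ⊢
    have hTi := nonneg_of_add_mul_add hα hβ h₀ hstep i (by omega)
    rw [hstep i (by omega)]
    linarith [mul_nonneg hα hTi]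

lemma sub_le_mul_of_add_mul_add (hα : 0 ≤ α) (hβ : 0 ≤ β) (h₀ : 0 ≤ T 0)
    (hstep : ∀ i < k, T (i + 1) = T i + (α * T i + β)) : T k - T 0 ≤ k * (α * T k + β) := by
  have hmono := monotoneOn_of_add_mul_add hα hβ h₀ hstep
  have hincr : ∀ i ∈ range k, T (i + 1) - T i ≤ α * T k + β := fun i hi => by
    have hik : i < k := mem_range.mp hi
    have hTi : T i ≤ T k := hmono (Set.mem_Iic.mpr hik.le) (Set.mem_Iic.mpr le_rfl) hik.le
    rw [hstep i hik]
    linarith [mul_le_mul_of_nonneg_left hTi hα]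
  calc T k - T 0 = ∑ i ∈ range k, (T (i + 1) - T i) := (sum_range_sub T k).symm
    _ ≤ ∑ _i ∈ range k, (α * T k + β) := sum_le_sum hincr
    _ = k * (α * T k + β) := by rw [sum_const, card_range, nsmul_eq_mul]

lemma sub_le_div_of_add_mul_add (hα : 0 ≤ α) (hβ : 0 ≤ β) (h₀ : 0 ≤ T 0) (hkα : k * α < 1)
    (hstep : ∀ i < k, T (i + 1) = T i + (α * T i + β)) :
    T k - T 0 ≤ (k * α * T 0 + k * β) / (1 - k * α) := by
  rw [le_div_iff₀ (by linarith)]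
  linarith [sub_le_mul_of_add_mul_add hα hβ h₀ hstep]

end GrowthRecursion

lemma sum_Icc_one_eq_sum_range_succ (f : ℕ → ℝ) (k : ℕ) :
    ∑ i ∈ Icc 1 k, f i = ∑ i ∈ range k, f (i + 1) := by
  rw [range_eq_Ico, sum_Ico_add']
  rfl

theorem stmt8_general (k : ℕ) (α β T₀ : ℝ) (hα : 0 ≤ α) (hβ : 0 ≤ β)
    (hT₀ : 0 ≤ T₀) (hkα : (k:ℝ) * α < 1) (A T : ℕ → ℝ) (h0 : T 0 = T₀)
    (hA : ∀ i ∈ Finset.Icc 1 k, A i = α * T (i-1) + β)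
    (hT : ∀ i ∈ Finset.Icc 1 k, T i = T (i-1) + A i) :
    ∑ i ∈ Finset.Icc 1 k, A i ≤ ((k:ℝ) * α * T₀ + (k:ℝ) * β) / (1 - (k:ℝ) * α) := by
  have hmem : ∀ i < k, i + 1 ∈ Icc 1 k := fun i hi => mem_Icc.mpr ⟨by omega, hi⟩
  have hincr : ∀ i < k, A (i + 1) = T (i + 1) - T i := fun i hi => by
    rw [hT _ (hmem i hi), Nat.add_sub_cancel]
    ring
  have hstep : ∀ i < k, T (i + 1) = T i + (α * T i + β) := fun i hi => by
    rw [← Nat.add_sub_cancel i 1, ← hA _ (hmem i hi), Nat.add_sub_cancel, hincr i hi]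
    ring
  have hsum : ∑ i ∈ Icc 1 k, A i = T k - T 0 := by
    rw [sum_Icc_one_eq_sum_range_succ, sum_congr rfl fun i hi => hincr i (mem_range.mp hi),
      sum_range_sub]
  subst h0
  rw [hsum]
  exact sub_le_div_of_add_mul_add hα hβ hT₀ hkα hstep

theorem stmt8 (k : ℕ) (hk : 1 ≤ k) (α β T₀ : ℝ) (hα : 0 ≤ α) (hβ : 0 ≤ β)
    (hT₀ : 0 ≤ T₀) (hkα : (k:ℝ) * α < 1) (A T : ℕ → ℝ) (h0 : T 0 = T₀)
    (hA : ∀ i ∈ Finset.Icc 1 k, A i = α * T (i-1) + β)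
    (hT : ∀ i ∈ Finset.Icc 1 k, T i = T (i-1) + A i) :
    ∑ i ∈ Finset.Icc 1 k, A i ≤ ((k:ℝ) * α * T₀ + (k:ℝ) * β) / (1 - (k:ℝ) * α) :=
  stmt8_general k α β T₀ hα hβ hT₀ hkα A T h0 hA hT
end
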